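/- arXiv:1806.09332 — 3 statements merged into one kernel-verified Lean document; each statement's English description precedes it below -/
import Mathlib

section
/- For every nonzero lattice point l ∈ ℤ²\{0} and every N ≥ 1, the sum over k in Λ_N = {k ∈ ℤ²\{0} : |k| ≤ N} of C_{k,l}² equals (|l|²/2)·Σ_{k∈Λ_N} 1/|k|², where C_{k,l} = (k^⊥·l)/|k|² and k^⊥ = (k₂, -k₁). -/
open scoped BigOperators
open MeasureTheory

noncomputable section

/-- `|k|² = k₁² + k₂²` for a lattice point `k ∈ ℤ²`, as a real number. -/
def nsq (k : ℤ × ℤ) : ℝ := (k.1 : ℝ) ^ 2 + (k.2 : ℝ) ^ 2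

/-- `k^⊥ = (k₂, -k₁)`. -/
def perp (k : ℤ × ℤ) : ℤ × ℤ := (k.2, -k.1)

/-- Euclidean inner product of two lattice points, as a real number. -/
def dotR (a b : ℤ × ℤ) : ℝ := (a.1 : ℝ) * (b.1 : ℝ) + (a.2 : ℝ) * (b.2 : ℝ)

/-- `C_{k,l} = (k^⊥ · l)/|k|²`. -/
def Ckl (k l : ℤ × ℤ) : ℝ := dotR (perp k) l / nsq k

/-- `D_{k,l} = (k · l)/|k|²`. -/
def Dkl (k l : ℤ × ℤ) : ℝ := dotR k l / nsq k

/-- `Λ_N = {k ∈ ℤ²\{0} : |k| ≤ N}` as a finite set. -/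
def ΛN (N : ℤ) : Finset (ℤ × ℤ) :=
  (Finset.Icc (-N, -N) (N, N)).filter (fun k => k ≠ 0 ∧ k.1 ^ 2 + k.2 ^ 2 ≤ N ^ 2)

/-!
The rotation `k ↦ k^⊥` permutes `Λ_N`, preserves `|k|`, and turns `C_{k,l}` into
`D_{k^⊥,l}`; hence `∑ C_{k,l}² = ∑ D_{k,l}²`. Lagrange's identity
`(k^⊥ · l)² + (k · l)² = |k|² |l|²` gives `C_{k,l}² + D_{k,l}² = |l|² / |k|²` termwise, so twice
the sum of `C_{k,l}²` is `|l|² ∑ 1/|k|²`.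
-/

lemma nsq_perp (k : ℤ × ℤ) : nsq (perp k) = nsq k := by
  simp only [nsq, perp, Int.cast_neg, neg_sq]
  ring

lemma perp_bijective : Function.Bijective perp := by
  refine ⟨fun a b h => ?_, fun k => ⟨(-k.2, k.1), by simp [perp]⟩⟩
  simp only [perp, Prod.mk.injEq, neg_inj] at h
  exact Prod.ext h.2 h.1

lemma Dkl_perp (k l : ℤ × ℤ) : Dkl (perp k) l = Ckl k l := by
  rw [Dkl, Ckl, nsq_perp]

lemma dotR_perp_sq_add_dotR_sq (k l : ℤ × ℤ) :
    dotR (perp k) l ^ 2 + dotR k l ^ 2 = nsq k * nsq l := by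
  simp only [dotR, perp, nsq, Int.cast_neg]
  ring

lemma Ckl_sq_add_Dkl_sq (k l : ℤ × ℤ) : Ckl k l ^ 2 + Dkl k l ^ 2 = nsq l / nsq k := by
  rw [Ckl, Dkl, div_pow, div_pow, ← add_div, dotR_perp_sq_add_dotR_sq, sq]
  rcases eq_or_ne (nsq k) 0 with hk | hk
  · simp [hk]
  · exact mul_div_mul_left _ _ hk

lemma perp_mem_ΛN {N : ℤ} {k : ℤ × ℤ} : perp k ∈ ΛN N ↔ k ∈ ΛN N := by
  simp only [ΛN, perp, Finset.mem_filter, Finset.mem_Icc, Prod.mk_le_mk, ne_eq, Prod.ext_iff,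
    Prod.fst_zero, Prod.snd_zero, neg_eq_zero, neg_sq]
  constructor <;> rintro ⟨⟨⟨h1, h2⟩, h3, h4⟩, h5, h6⟩ <;> refine ⟨⟨⟨?_, ?_⟩, ?_, ?_⟩, ?_, ?_⟩ <;>
    omega

lemma sum_Ckl_sq_of_perp_mem_iff (S : Finset (ℤ × ℤ)) (hS : ∀ k, perp k ∈ S ↔ k ∈ S)
    (l : ℤ × ℤ) : ∑ k ∈ S, Ckl k l ^ 2 = (nsq l / 2) * ∑ k ∈ S, 1 / nsq k := by
  have hCD : ∑ k ∈ S, Ckl k l ^ 2 = ∑ k ∈ S, Dkl k l ^ 2 := by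
    simp_rw [← Dkl_perp]
    exact Finset.sum_bijective perp perp_bijective (fun k => (hS k).symm) (fun _ _ => rfl)
  have htwice : 2 * ∑ k ∈ S, Ckl k l ^ 2 = nsq l * ∑ k ∈ S, 1 / nsq k := by
    calc 2 * ∑ k ∈ S, Ckl k l ^ 2 = ∑ k ∈ S, (Ckl k l ^ 2 + Dkl k l ^ 2) := by
          rw [Finset.sum_add_distrib, ← hCD, two_mul]
      _ = nsq l * ∑ k ∈ S, 1 / nsq k := by
          simp_rw [Ckl_sq_add_Dkl_sq, Finset.mul_sum, mul_one_div]
  linarith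

theorem sum_Ckl_sq_general (l : ℤ × ℤ) (N : ℤ) :
    ∑ k ∈ ΛN N, (Ckl k l) ^ 2 = (nsq l / 2) * ∑ k ∈ ΛN N, 1 / nsq k :=
  sum_Ckl_sq_of_perp_mem_iff _ (fun _ => perp_mem_ΛN) l

theorem sum_Ckl_sq (l : ℤ × ℤ) (hl : l ≠ 0) (N : ℤ) (hN : 1 ≤ N) :
    ∑ k ∈ ΛN N, (Ckl k l) ^ 2 = (nsq l / 2) * ∑ k ∈ ΛN N, 1 / nsq k :=
  sum_Ckl_sq_general l N
end
end

section
/- For all j, k, l ∈ ℤ²\{0}: |⟨H_{e_j}, ẽ_k ⊗ ẽ_l⟩|² = 2π⁴·δ_{j,±(k+l)}·(j·k^⊥)²·(1/|l|² - 1/|k|²)², where δ_{j,±(k+l)} is 1 if j = k+l or j = -(k+l) and 0 otherwise. -/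
open scoped BigOperators
open MeasureTheory

noncomputable section

/-- `ℤ²₊ = {k ≠ 0 : k₁ > 0 or (k₁ = 0 and k₂ > 0)}`. -/
def Zplus (k : ℤ × ℤ) : Prop := 0 < k.1 ∨ (k.1 = 0 ∧ 0 < k.2)

instance : DecidablePred Zplus := fun k => by unfold Zplus; infer_instance

/-- The real trigonometric basis `e_k` on the torus `𝕋² = ℝ²/ℤ²`, viewed as a
periodic function on `ℝ²`: `√2 cos(2πk·x)` for `k ∈ ℤ²₊` and `√2 sin(2πk·x)` otherwise. -/
def eR (k : ℤ × ℤ) (x : ℝ × ℝ) : ℝ :=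
  if Zplus k then Real.sqrt 2 * Real.cos (2 * Real.pi * ((k.1 : ℝ) * x.1 + (k.2 : ℝ) * x.2))
  else Real.sqrt 2 * Real.sin (2 * Real.pi * ((k.1 : ℝ) * x.1 + (k.2 : ℝ) * x.2))

/-- The divergence-free vector field `σ_k(x) = (1/√2)(k^⊥/|k|²) e_k(x)`. -/
def sigmaVF (k : ℤ × ℤ) (x : ℝ × ℝ) : ℝ × ℝ :=
  ((Real.sqrt 2)⁻¹ * ((k.2 : ℝ) / nsq k) * eR k x,
   (Real.sqrt 2)⁻¹ * (-(k.1 : ℝ) / nsq k) * eR k x)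

/-- The explicit Fourier coefficient `⟨H_{e_j}, ẽ_k ⊗ ẽ_l⟩` of the nonlinear kernel
`H_{e_j}(x,y) = π(e_{-j}(x) - e_{-j}(y)) j·K(x-y)` on `𝕋²`, as computed in the paper:
`√2π²(j·l^⊥/|l|² + j·k^⊥/|k|²)` times `δ_{j,k+l} - δ_{j,-k-l}` for `j ∈ ℤ²₊`
and times `i(δ_{j,k+l} + δ_{j,-k-l})` for `j ∈ ℤ²₋`. -/
def Hcoef (j k l : ℤ × ℤ) : ℂ :=
  ((Real.sqrt 2 * Real.pi ^ 2 : ℝ) : ℂ) *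
    ((dotR j (perp l) / nsq l + dotR j (perp k) / nsq k : ℝ) : ℂ) *
    (if Zplus j then
      ((if j = k + l then (1 : ℂ) else 0) - (if j = -(k + l) then (1 : ℂ) else 0))
     else
      Complex.I * ((if j = k + l then (1 : ℂ) else 0) + (if j = -(k + l) then (1 : ℂ) else 0)))

lemma normSq_aux (A : ℝ) (s : ℂ) (hs : ‖s‖ = 1) :
    ‖((Real.sqrt 2 * Real.pi ^ 2 : ℝ) : ℂ) * (A : ℝ) * s‖ ^ 2
      = 2 * Real.pi ^ 4 * A ^ 2 := by
  rw [norm_mul, norm_mul, hs, mul_one, Complex.norm_real, Complex.norm_real,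
    Real.norm_eq_abs, Real.norm_eq_abs, mul_pow, sq_abs, sq_abs, mul_pow,
    Real.sq_sqrt (by norm_num : (0:ℝ) ≤ 2)]
  ring

theorem normSq_Hcoef (j k l : ℤ × ℤ) (hj : j ≠ 0) (hk : k ≠ 0) (hl : l ≠ 0) :
    ‖Hcoef j k l‖ ^ 2
      = 2 * Real.pi ^ 4 * (if j = k + l ∨ j = -(k + l) then 1 else 0) *
          (dotR j (perp k)) ^ 2 * (1 / nsq l - 1 / nsq k) ^ 2 := by
  have h12 : ¬ (j = k + l ∧ j = -(k + l)) := by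
    rintro ⟨h1, h2⟩
    apply hj
    have h3 : k + l = -(k + l) := h1 ▸ h2
    have hkl : k + l = 0 := by
      have h4 := congrArg Prod.fst h3
      have h5 := congrArg Prod.snd h3
      simp only [Prod.fst_add, Prod.snd_add, Prod.fst_neg, Prod.snd_neg] at h4 h5
      rw [Prod.ext_iff]
      constructor <;> simp <;> omega
    rw [h1, hkl]
  have key : j = k + l ∨ j = -(k + l) →
      dotR j (perp l) / nsq l + dotR j (perp k) / nsq k
        = dotR j (perp k) * (1 / nsq k - 1 / nsq l) := by
    intro hor
    have hnum : dotR j (perp l) = - dotR j (perp k) := by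
      rcases hor with h | h <;> subst h <;>
        simp only [dotR, perp, Prod.fst_add, Prod.snd_add, Prod.fst_neg, Prod.snd_neg] <;>
        push_cast <;> ring
    rw [hnum]; ring
  by_cases h1 : j = k + l
  · have h2 : ¬ j = -(k + l) := fun h => h12 ⟨h1, h⟩
    have hA := key (Or.inl h1)
    have hEq : Hcoef j k l =
        ((Real.sqrt 2 * Real.pi ^ 2 : ℝ) : ℂ) *
          ((dotR j (perp k) * (1 / nsq k - 1 / nsq l) : ℝ) : ℂ) *
          (if Zplus j then 1 else Complex.I) := by
      simp only [Hcoef, if_pos h1, if_neg h2, hA]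
      split <;> ring
    rw [hEq, normSq_aux _ _ (by split <;> simp), if_pos (Or.inl h1)]
    ring
  · by_cases h2 : j = -(k + l)
    · have hA := key (Or.inr h2)
      have hEq : Hcoef j k l =
          ((Real.sqrt 2 * Real.pi ^ 2 : ℝ) : ℂ) *
            ((dotR j (perp k) * (1 / nsq k - 1 / nsq l) : ℝ) : ℂ) *
            (if Zplus j then -1 else Complex.I) := by
        simp only [Hcoef, if_neg h1, if_pos h2, hA]
        split <;> ring
      rw [hEq, normSq_aux _ _ (by split <;> simp), if_pos (Or.inr h2)]
      ring
    · have e0 : Hcoef j k l = 0 := by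
        simp only [Hcoef, if_neg h1, if_neg h2]
        split <;> ring
      rw [e0, if_neg (by tauto)]
      simp
end
end

section
/- There exists a constant C > 0 such that for every j ∈ ℤ²\{0} with |j| ≥ 2, Σ_{k ∈ ℤ²\{0}, k ≠ j} 1/(|j-k|² |k|²) ≤ C·log|j|/|j|². -/
open scoped BigOperators
open MeasureTheory

noncomputable section

/-!
Work with the sup norm `‖k‖ = max |k₁| |k₂|` of `ℤ × ℤ`, which is comparable to the Euclidean
one (`‖k‖² ≤ |k|² ≤ 2‖k‖²`) and whose spheres are the boxes of `8m` points. Where `‖k‖ ≥ 2‖j‖`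
the summand is at most `4/‖k‖⁴`, and the shell sum `∑_{m ≥ 2‖j‖} 8m/m⁴` is `O(1/‖j‖²)`.
Elsewhere `‖j‖ ≤ ‖k‖ + ‖j - k‖` gives `1/(‖j - k‖²‖k‖²) ≤ 2/‖j‖² (1/‖k‖² + 1/‖j - k‖²)`, and
both `k` and `j - k` lie in the box of radius `3‖j‖`, over which `∑ 1/‖k‖²` is at most
`8 H(3‖j‖) = O(log ‖j‖)` (`H` the harmonic numbers).
-/

open Finset

namespace LatticeConvolution

lemma norm_eq_max_natAbs (k : ℤ × ℤ) : ‖k‖ = max k.1.natAbs k.2.natAbs := by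
  simp [Prod.norm_def, Int.norm_eq_abs, Nat.cast_max]

lemma sum_le_sum_shells (t : Finset (ℤ × ℤ)) (S : Finset ℕ) (f : ℕ → ℝ)
    (hf : ∀ m ∈ S, 0 ≤ f m) (hS : 0 ∉ S) (ht : ∀ k ∈ t, max k.1.natAbs k.2.natAbs ∈ S) :
    ∑ k ∈ t, f (max k.1.natAbs k.2.natAbs) ≤ ∑ m ∈ S, 8 * m * f m := by
  rw [← sum_fiberwise_of_maps_to ht]
  refine sum_le_sum fun m hm => ?_
  have hfiber : {k ∈ t | max k.1.natAbs k.2.natAbs = m} ⊆ box m := fun k hk =>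
    Int.mem_box.mpr (mem_filter.mp hk).2
  calc ∑ k ∈ t with max k.1.natAbs k.2.natAbs = m, f (max k.1.natAbs k.2.natAbs)
      = #{k ∈ t | max k.1.natAbs k.2.natAbs = m} * f m := by
        rw [sum_congr rfl fun k hk => congrArg f (mem_filter.mp hk).2, sum_const, nsmul_eq_mul]
    _ ≤ #(box m : Finset (ℤ × ℤ)) * f m :=
        mul_le_mul_of_nonneg_right (by exact_mod_cast card_le_card hfiber) (hf m hm)
    _ = 8 * m * f m := by rw [Int.card_box (ne_of_mem_of_not_mem hm hS)]; push_cast; ring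

lemma sum_Icc_one_div_pow_three_le {a : ℕ} (ha : 0 < a) (b : ℕ) :
    ∑ m ∈ Icc a b, 1 / (m : ℝ) ^ 3 ≤ 2 / (a : ℝ) ^ 2 := by
  have hIcc : Icc a b = Ioo (a - 1) (b + 1) := by ext; simp; omega
  have ha' : (0 : ℝ) < a := by exact_mod_cast ha
  calc ∑ m ∈ Icc a b, 1 / (m : ℝ) ^ 3 ≤ ∑ m ∈ Icc a b, (1 / a) * ((m : ℝ) ^ 2)⁻¹ := by
        refine sum_le_sum fun m hm => ?_
        have ham : (a : ℝ) ≤ m := by exact_mod_cast (mem_Icc.mp hm).1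
        have hm0 : (0 : ℝ) < m := ha'.trans_le ham
        calc 1 / (m : ℝ) ^ 3 = (1 / m) * ((m : ℝ) ^ 2)⁻¹ := by ring
          _ ≤ (1 / a) * ((m : ℝ) ^ 2)⁻¹ := by gcongr
    _ ≤ (1 / a) * (2 / a) := by
        rw [← mul_sum, hIcc]
        gcongr
        convert sum_Ioo_inv_sq_le (α := ℝ) (a - 1) (b + 1)
        push_cast [Nat.cast_sub ha]; ring
    _ = 2 / (a : ℝ) ^ 2 := by ring

lemma sum_one_div_norm_sq_le {t : Finset (ℤ × ℤ)} (h0 : 0 ∉ t) {N : ℕ}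
    (ht : ∀ k ∈ t, ‖k‖ ≤ N) :
    ∑ k ∈ t, 1 / ‖k‖ ^ 2 ≤ 8 * (1 + Real.log N) := by
  have hshell : ∀ k ∈ t, max k.1.natAbs k.2.natAbs ∈ Icc 1 N := fun k hk => by
    have hk0 := norm_ne_zero_iff.mpr (ne_of_mem_of_not_mem hk h0)
    have hkN := ht k hk
    rw [norm_eq_max_natAbs, Nat.cast_ne_zero] at hk0
    rw [norm_eq_max_natAbs] at hkN
    exact mem_Icc.mpr ⟨Nat.one_le_iff_ne_zero.mpr hk0, by exact_mod_cast hkN⟩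
  calc ∑ k ∈ t, 1 / ‖k‖ ^ 2
      = ∑ k ∈ t, (fun m : ℕ => 1 / (m : ℝ) ^ 2) (max k.1.natAbs k.2.natAbs) := by
        simp only [norm_eq_max_natAbs]
    _ ≤ ∑ m ∈ Icc 1 N, 8 * m * (1 / (m : ℝ) ^ 2) :=
        sum_le_sum_shells t _ (fun m : ℕ => 1 / (m : ℝ) ^ 2) (fun _ _ => by positivity) (by simp)
          hshell
    _ = 8 * harmonic N := by
        rw [harmonic_eq_sum_Icc]; push_cast; rw [mul_sum]
        refine sum_congr rfl fun m hm => ?_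
        have : (m : ℝ) ≠ 0 := by have := (mem_Icc.mp hm).1; positivity
        field_simp
    _ ≤ 8 * (1 + Real.log N) := by gcongr; exact harmonic_le_one_add_log N

lemma sum_one_div_norm_pow_four_le {t : Finset (ℤ × ℤ)} {a : ℕ} (ha : 0 < a)
    (ht : ∀ k ∈ t, a ≤ ‖k‖) :
    ∑ k ∈ t, 1 / ‖k‖ ^ 4 ≤ 16 / (a : ℝ) ^ 2 := by
  set b := t.sup fun k => max k.1.natAbs k.2.natAbs
  have hshell : ∀ k ∈ t, max k.1.natAbs k.2.natAbs ∈ Icc a b := fun k hk => by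
    have hka := ht k hk
    rw [norm_eq_max_natAbs] at hka
    exact mem_Icc.mpr
      ⟨by exact_mod_cast hka, le_sup (f := fun k : ℤ × ℤ => max k.1.natAbs k.2.natAbs) hk⟩
  calc ∑ k ∈ t, 1 / ‖k‖ ^ 4
      = ∑ k ∈ t, (fun m : ℕ => 1 / (m : ℝ) ^ 4) (max k.1.natAbs k.2.natAbs) := by
        simp only [norm_eq_max_natAbs]
    _ ≤ ∑ m ∈ Icc a b, 8 * m * (1 / (m : ℝ) ^ 4) :=
        sum_le_sum_shells t _ (fun m : ℕ => 1 / (m : ℝ) ^ 4) (fun _ _ => by positivity)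
          (by simp; omega) hshell
    _ = 8 * ∑ m ∈ Icc a b, 1 / (m : ℝ) ^ 3 := by
        rw [mul_sum]
        refine sum_congr rfl fun m hm => ?_
        have : (m : ℝ) ≠ 0 := by have := ha.trans_le (mem_Icc.mp hm).1; positivity
        field_simp
    _ ≤ 8 * (2 / (a : ℝ) ^ 2) := by gcongr; exact sum_Icc_one_div_pow_three_le ha b
    _ = 16 / (a : ℝ) ^ 2 := by ring

lemma one_div_sq_mul_sq_le {x y z : ℝ} (hx : 0 < x) (hy : 0 < y) (hz : 0 < z)
    (hxyz : z ≤ x + y) :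
    1 / (x ^ 2 * y ^ 2) ≤ 2 / z ^ 2 * (1 / x ^ 2 + 1 / y ^ 2) := by
  have hsq : z ^ 2 ≤ 2 * (x ^ 2 + y ^ 2) := by nlinarith [sq_nonneg (x - y)]
  rw [div_add_div _ _ (by positivity) (by positivity), div_mul_div_comm,
    div_le_div_iff₀ (by positivity) (by positivity)]
  nlinarith [mul_pos (pow_pos hx 2) (pow_pos hy 2)]

lemma one_div_norm_sub_sq_mul_norm_sq_le {E : Type*} [SeminormedAddCommGroup E] {j k : E}
    (hk : 0 < ‖k‖) (hjk : 2 * ‖j‖ ≤ ‖k‖) : 1 / (‖j - k‖ ^ 2 * ‖k‖ ^ 2) ≤ 4 / ‖k‖ ^ 4 := by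
  have hhalf : ‖k‖ / 2 ≤ ‖j - k‖ := by
    have := norm_sub_norm_le k j
    rw [norm_sub_rev] at this
    linarith
  calc 1 / (‖j - k‖ ^ 2 * ‖k‖ ^ 2) ≤ 1 / ((‖k‖ / 2) ^ 2 * ‖k‖ ^ 2) := by gcongr
    _ = 4 / ‖k‖ ^ 4 := by field_simp; ring

lemma sum_far_le {j : ℤ × ℤ} (hj : j ≠ 0) (t : Finset (ℤ × ℤ)) :
    ∑ k ∈ t with 2 * ‖j‖ ≤ ‖k‖, 1 / (‖j - k‖ ^ 2 * ‖k‖ ^ 2) ≤ 16 / ‖j‖ ^ 2 := by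
  set n := max j.1.natAbs j.2.natAbs
  have hn : ‖j‖ = n := norm_eq_max_natAbs j
  have hj0 : 0 < ‖j‖ := norm_pos_iff.mpr hj
  calc _ ≤ ∑ k ∈ t with 2 * ‖j‖ ≤ ‖k‖, 4 * (1 / ‖k‖ ^ 4) := by
        refine sum_le_sum fun k hk => ?_
        have hjk := (mem_filter.mp hk).2
        rw [mul_one_div]
        exact one_div_norm_sub_sq_mul_norm_sq_le (by linarith) hjk
    _ ≤ 4 * (16 / ((2 * n : ℕ) : ℝ) ^ 2) := by
        rw [← mul_sum]
        gcongr
        refine sum_one_div_norm_pow_four_le (by exact_mod_cast (by linarith : (0 : ℝ) < 2 * n))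
          fun k hk => ?_
        push_cast
        rw [← hn]
        exact (mem_filter.mp hk).2
    _ = 16 / ‖j‖ ^ 2 := by rw [hn]; push_cast; field_simp; ring

lemma sum_near_le {j : ℤ × ℤ} (hj : j ≠ 0) {t : Finset (ℤ × ℤ)} (h0 : 0 ∉ t) (hjt : j ∉ t) :
    ∑ k ∈ t with ‖k‖ < 2 * ‖j‖, 1 / (‖j - k‖ ^ 2 * ‖k‖ ^ 2)
      ≤ 32 * (1 + Real.log (3 * ‖j‖)) / ‖j‖ ^ 2 := by
  set n := max j.1.natAbs j.2.natAbs
  have hn : ‖j‖ = n := norm_eq_max_natAbs j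
  set s := {k ∈ t | ‖k‖ < 2 * ‖j‖}
  have hs : ∀ k ∈ s, k ∈ t ∧ ‖k‖ < 2 * ‖j‖ := fun k hk => mem_filter.mp hk
  have hj0 : 0 < ‖j‖ := norm_pos_iff.mpr hj
  have hlog : Real.log ((3 * n : ℕ) : ℝ) = Real.log (3 * ‖j‖) := by push_cast [hn]; rfl
  calc _ ≤ ∑ k ∈ s, 2 / ‖j‖ ^ 2 * (1 / ‖j - k‖ ^ 2 + 1 / ‖k‖ ^ 2) := by
        refine sum_le_sum fun k hk => ?_
        have hkt := (hs k hk).1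
        exact one_div_sq_mul_sq_le
          (norm_pos_iff.mpr (sub_ne_zero.mpr (ne_of_mem_of_not_mem hkt hjt).symm))
          (norm_pos_iff.mpr (ne_of_mem_of_not_mem hkt h0)) hj0 (by linarith [norm_sub_norm_le j k])
    _ = 2 / ‖j‖ ^ 2 * (∑ k ∈ s.image (j - ·), 1 / ‖k‖ ^ 2 + ∑ k ∈ s, 1 / ‖k‖ ^ 2) := by
        rw [← mul_sum, sum_add_distrib, sum_image fun _ _ _ _ h => sub_right_injective h]
    _ ≤ 2 / ‖j‖ ^ 2 * (8 * (1 + Real.log (3 * ‖j‖)) + 8 * (1 + Real.log (3 * ‖j‖))) := by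
        rw [← hlog]
        gcongr
        · refine sum_one_div_norm_sq_le ?_ fun k hk => ?_
          · simp only [mem_image, sub_eq_zero, not_exists, not_and]
            exact fun k hk hjk => hjt (hjk ▸ (hs k hk).1)
          · obtain ⟨l, hl, rfl⟩ := mem_image.mp hk
            push_cast
            linarith [norm_sub_le j l, (hs l hl).2]
        · refine sum_one_div_norm_sq_le (fun h => h0 (hs 0 h).1) fun k hk => ?_
          push_cast
          linarith [(hs k hk).2]
    _ = 32 * (1 + Real.log (3 * ‖j‖)) / ‖j‖ ^ 2 := by ring

theorem sum_one_div_norm_sub_sq_mul_norm_sq_le {j : ℤ × ℤ} (hj : 2 ≤ ‖j‖) {t : Finset (ℤ × ℤ)}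
    (h0 : 0 ∉ t) (hjt : j ∉ t) :
    ∑ k ∈ t, 1 / (‖j - k‖ ^ 2 * ‖k‖ ^ 2) ≤ 192 * Real.log ‖j‖ / ‖j‖ ^ 2 := by
  have hj0 : j ≠ 0 := norm_pos_iff.mp (by linarith)
  have hlog : 1 / 2 ≤ Real.log ‖j‖ :=
    (Real.log_two_gt_d9.trans_le' (by norm_num)).le.trans (Real.log_le_log (by norm_num) hj)
  have hlog3 : Real.log (3 * ‖j‖) ≤ 3 * Real.log ‖j‖ :=
    calc Real.log (3 * ‖j‖) ≤ Real.log (‖j‖ ^ 3) :=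
          Real.log_le_log (by positivity)
            (by nlinarith [mul_le_mul hj hj (by norm_num) (by linarith)])
      _ = 3 * Real.log ‖j‖ := by rw [Real.log_pow]; norm_num
  rw [← sum_filter_add_sum_filter_not t (fun k => 2 * ‖j‖ ≤ ‖k‖)]
  simp_rw [not_le]
  calc _ ≤ 16 / ‖j‖ ^ 2 + 32 * (1 + Real.log (3 * ‖j‖)) / ‖j‖ ^ 2 :=
        add_le_add (sum_far_le hj0 t) (sum_near_le hj0 h0 hjt)
    _ ≤ 192 * Real.log ‖j‖ / ‖j‖ ^ 2 := by
        rw [← add_div]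
        gcongr
        linarith

lemma norm_sq_le_nsq (k : ℤ × ℤ) : ‖k‖ ^ 2 ≤ nsq k := by
  rw [Prod.norm_def, Int.norm_eq_abs, Int.norm_eq_abs, nsq]
  rcases max_cases |(k.1 : ℝ)| |(k.2 : ℝ)| with ⟨h, -⟩ | ⟨h, -⟩ <;>
    rw [h, sq_abs] <;> nlinarith [sq_nonneg (k.1 : ℝ), sq_nonneg (k.2 : ℝ)]

lemma nsq_le_two_mul_norm_sq (k : ℤ × ℤ) : nsq k ≤ 2 * ‖k‖ ^ 2 := by
  rw [Prod.norm_def, Int.norm_eq_abs, Int.norm_eq_abs, nsq]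
  rcases max_cases |(k.1 : ℝ)| |(k.2 : ℝ)| with ⟨h, hle⟩ | ⟨h, hle⟩ <;> rw [h] <;>
    nlinarith [sq_abs (k.1 : ℝ), sq_abs (k.2 : ℝ), abs_nonneg (k.1 : ℝ), abs_nonneg (k.2 : ℝ)]

lemma two_le_norm_of_two_le_sqrt_nsq {j : ℤ × ℤ} (hj : 2 ≤ √(nsq j)) : 2 ≤ ‖j‖ := by
  have hnsq : 2 ^ 2 ≤ nsq j :=
    (Real.le_sqrt (by norm_num) ((sq_nonneg _).trans (norm_sq_le_nsq j))).mp hj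
  have h1 : 1 < ‖j‖ := by nlinarith [nsq_le_two_mul_norm_sq j, norm_nonneg j]
  rw [norm_eq_max_natAbs] at h1 ⊢
  exact_mod_cast Nat.succ_le_of_lt (Nat.one_lt_cast.mp h1)

lemma one_div_nsq_mul_nsq_le {a b : ℤ × ℤ} (ha : a ≠ 0) (hb : b ≠ 0) :
    1 / (nsq a * nsq b) ≤ 1 / (‖a‖ ^ 2 * ‖b‖ ^ 2) := by
  have := norm_pos_iff.mpr ha
  have := norm_pos_iff.mpr hb
  exact one_div_le_one_div_of_le (by positivity) (mul_le_mul (norm_sq_le_nsq a)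
    (norm_sq_le_nsq b) (sq_nonneg _) ((sq_nonneg _).trans (norm_sq_le_nsq a)))

end LatticeConvolution

open LatticeConvolution

theorem discrete_convolution_estimate :
    ∃ C : ℝ, 0 < C ∧ ∀ j : ℤ × ℤ, j ≠ 0 → 2 ≤ Real.sqrt (nsq j) →
      ∑' k : {k : ℤ × ℤ // k ≠ 0 ∧ k ≠ j}, 1 / (nsq (j - k.1) * nsq k.1)
        ≤ C * Real.log (Real.sqrt (nsq j)) / nsq j := by
  refine ⟨384, by norm_num, fun j _ hj => ?_⟩
  have hnorm : 2 ≤ ‖j‖ := two_le_norm_of_two_le_sqrt_nsq hj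
  have hnsq : 0 < nsq j := by nlinarith [norm_sq_le_nsq j]
  have hlog0 : 0 ≤ Real.log ‖j‖ := Real.log_nonneg (by linarith)
  have hlog : Real.log ‖j‖ ≤ Real.log √(nsq j) :=
    Real.log_le_log (by linarith) (Real.le_sqrt_of_sq_le (norm_sq_le_nsq j))
  refine tsum_le_of_sum_le' (div_nonneg (by linarith) hnsq.le) fun s => ?_
  calc ∑ k ∈ s, 1 / (nsq (j - k.1) * nsq k.1)
      ≤ ∑ k ∈ s.map (Function.Embedding.subtype _), 1 / (‖j - k‖ ^ 2 * ‖k‖ ^ 2) := by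
        rw [sum_map]
        exact sum_le_sum fun k _ => one_div_nsq_mul_nsq_le (sub_ne_zero.mpr k.2.2.symm) k.2.1
    _ ≤ 192 * Real.log ‖j‖ / ‖j‖ ^ 2 :=
        sum_one_div_norm_sub_sq_mul_norm_sq_le hnorm (by simp) (by simp)
    _ ≤ 384 * Real.log √(nsq j) / nsq j := by
        rw [div_le_div_iff₀ (by positivity) hnsq]
        nlinarith [nsq_le_two_mul_norm_sq j]
end
end
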